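/- Let κ be a positive integer, let G = (V,E) be a finite simple graph with no isolated vertices in which every odd cycle has length at least 2κ+1, let C be a minimum edge cover of G, and let y : V → ℚ be defined from int as in the context. Then y_u + y_v ≥ κ/(κ+1) for every edge (u,v) ∈ C. -/

import Mathlib

open SimpleGraph Finset

variable {V : Type*} [Fintype V] [DecidableEq V]

/-- `C` is an edge cover of `G`: a set of edges of `G` such that every vertex is
incident to at least one edge of `C`. -/
def IsEdgeCover (G : SimpleGraph V) (C : Set (Sym2 V)) : Prop :=
  C ⊆ G.edgeSet ∧ ∀ v : V, ∃ e ∈ C, v ∈ e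

/-- A vertex is tight w.r.t. `C` if it is incident to exactly one edge of `C`. -/
def IsTight (C : Set (Sym2 V)) (v : V) : Prop :=
  {e ∈ C | v ∈ e}.ncard = 1

/-- A vertex is loose w.r.t. `C` if it is not tight. -/
def IsLoose (C : Set (Sym2 V)) (v : V) : Prop :=
  ¬ IsTight C v

/-- `p` is an interchanging path w.r.t. the edge cover `C`: a simple path starting at a
loose vertex whose first edge lies in `C` and such that exactly one of any two
consecutive edges lies in `C`. (The trivial path at a loose vertex is interchanging.) -/
def IsInterchanging (G : SimpleGraph V) (C : Set (Sym2 V)) {u v : V} (p : G.Walk u v) :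
    Prop :=
  p.IsPath ∧ IsLoose C u ∧
    (∀ h : 0 < p.edges.length, p.edges[0]'h ∈ C) ∧
    (∀ i : ℕ, ∀ h : i + 1 < p.edges.length,
      ((p.edges[i]'(Nat.lt_of_succ_lt h) ∈ C) ↔ (p.edges[i + 1]'h ∉ C)))

/-- `int(v)`: the length of a shortest interchanging path ending at `v` (`∞` if none). -/
noncomputable def intDist (G : SimpleGraph V) (C : Set (Sym2 V)) (v : V) : ℕ∞ :=
  ⨅ (u : V) (p : G.Walk u v) (_ : IsInterchanging G C p), (p.length : ℕ∞)


/-- The dual assignment `y` defined from `int`: `y v = int(v)/(2(κ+1))` if `int(v) < κ`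
is even, `y v = 1 - (int(v)+1)/(2(κ+1))` if `int(v) < κ` is odd, and
`y v = ⌈κ/2⌉/(κ+1)` otherwise. -/
noncomputable def yEC (G : SimpleGraph V) (C : Set (Sym2 V)) (κ : ℕ) (v : V) : ℚ :=
  if intDist G C v < (κ : ℕ∞) then
    (if Even (intDist G C v).toNat then
      ((intDist G C v).toNat : ℚ) / (2 * (κ + 1))
    else
      1 - (((intDist G C v).toNat : ℚ) + 1) / (2 * (κ + 1)))
  else
    (⌈(κ : ℚ) / 2⌉ : ℚ) / (κ + 1)


/-!
Let `uv ∈ C` with `int(u) ≤ int(v)`; if `int(u) ≥ κ` both values are `⌈κ/2⌉/(κ+1)`, so let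
`int(u) = a < κ`. If `a` were odd, `u` would be tight and the last edge of a shortest
interchanging path to `u` would be `uv`, giving `int(v) < a`. So `a` is even and extending that
path by `uv` gives `int(v) ≤ a + 1`, which leaves only the bound itself to compute, unless
`int(v) = b` is even too. In that case the two shortest paths joined by `uv` form a walk of odd
length `a + b + 1 < 2κ + 1` between loose vertices whose edges alternate in and out of `C`,
starting and ending in `C`. A shortest such walk contains no odd closed subwalk (that would hold
an odd cycle shorter than `2κ + 1`) and no even one (cutting it out gives a shorter such walk),
so it is a path; exchanging its edges in and out of `C` then gives a smaller edge cover.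
-/

def List.Alternates {α : Type*} (C : Set α) (n : ℕ) (l : List α) : Prop :=
  ∀ i (h : i < l.length), l[i] ∈ C ↔ Even (n + i)

namespace List

variable {α : Type*} {C : Set α} {n : ℕ} {l l₁ l₂ : List α}

theorem alternates_nil : Alternates C n [] := fun _ h => absurd h (by simp)

theorem alternates_cons {a : α} :
    Alternates C n (a :: l) ↔ (a ∈ C ↔ Even n) ∧ Alternates C (n + 1) l := by
  constructor
  · intro h
    refine ⟨h 0 (by simp), fun i hi => ?_⟩
    rw [add_right_comm]
    exact h (i + 1) (by simpa using hi)
  · rintro ⟨h0, h⟩ (_ | i) hi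
    · exact h0
    · rw [← add_assoc, add_right_comm]
      exact h i (by simpa using hi)

theorem alternates_append :
    Alternates C n (l₁ ++ l₂) ↔ Alternates C n l₁ ∧ Alternates C (n + l₁.length) l₂ := by
  induction l₁ generalizing n with
  | nil => simp [alternates_nil]
  | cons a l ih => simp [alternates_cons, ih, and_assoc, add_assoc, add_comm 1]

theorem alternates_zero_iff :
    Alternates C 0 l ↔
      (∀ h : 0 < l.length, l[0] ∈ C) ∧ ∀ i (h : i + 1 < l.length), (l[i] ∈ C ↔ l[i + 1] ∉ C) := by
  constructor
  · intro h
    refine ⟨fun h0 => (h 0 h0).2 (by simp), fun i hi => ?_⟩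
    rw [h i (by omega), h (i + 1) hi, zero_add, zero_add, Nat.even_add_one, not_not]
  · rintro ⟨h0, hstep⟩ i hi
    induction i with
    | zero => simpa using h0 hi
    | succ i ih =>
      have h₁ := ih (by omega)
      have h₂ := hstep i hi
      rw [zero_add] at h₁ ⊢
      rw [Nat.even_add_one]
      tauto

theorem Alternates.of_mod_two_eq {m : ℕ} (h : Alternates C n l) (hnm : n % 2 = m % 2) :
    Alternates C m l := fun i hi => by
  rw [h i hi, Nat.even_iff, Nat.even_iff]
  omega

theorem Alternates.reverse (h : Alternates C n l) :
    Alternates C (n + l.length + 1) l.reverse := fun i hi => by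
  rw [List.length_reverse] at hi
  rw [List.getElem_reverse, h _ (by omega), Nat.even_iff, Nat.even_iff]
  omega

theorem Alternates.take_append_drop (h : Alternates C n l) {i j : ℕ} (hij : i ≤ j)
    (hj : j ≤ l.length) (hparity : i % 2 = j % 2) :
    Alternates C n (l.take i ++ l.drop j) := by
  have hi := (List.take_append_drop i l ▸ h)
  have hj := (List.take_append_drop j l ▸ h)
  rw [alternates_append, List.length_take_of_le (by omega)] at hi hj ⊢
  exact ⟨hi.1, hj.2.of_mod_two_eq (by omega)⟩

theorem Alternates.countP_mem [DecidablePred (· ∈ C)] (h : Alternates C n l) :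
    l.countP (· ∈ C) = (l.length + 1 - n % 2) / 2 := by
  induction l generalizing n with
  | nil =>
    simp only [List.countP_nil, List.length_nil]
    omega
  | cons a l ih =>
    rw [alternates_cons] at h
    rw [List.countP_cons, ih h.2, List.length_cons]
    by_cases ha : a ∈ C
    · have := h.1.1 ha
      rw [Nat.even_iff] at this
      simp only [ha, decide_true, if_true]
      omega
    · have := mt h.1.2 ha
      rw [Nat.even_iff] at this
      simp only [ha, decide_false, Bool.false_eq_true, if_false]
      omega

theorem Nodup.ncard_setOf_mem_and (hl : l.Nodup) (p : α → Prop) [DecidablePred p] :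
    {a | a ∈ l ∧ p a}.ncard = l.countP p := by
  classical
  have : {a | a ∈ l ∧ p a} = ↑(l.filter p).toFinset := by ext; simp
  rw [this, Set.ncard_coe_finset, List.toFinset_card_of_nodup (hl.filter _),
    List.countP_eq_length_filter]

end List

namespace SimpleGraph.Walk

variable {V : Type*} {G : SimpleGraph V}

theorem exists_getVert_eq_of_not_isPath {x z : V} {W : G.Walk x z} (h : ¬ W.IsPath) :
    ∃ i j, i < j ∧ j ≤ W.length ∧ W.getVert i = W.getVert j := by
  rw [← IsPath.getVert_injOn_iff] at h
  simp only [Set.InjOn, not_forall] at h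
  obtain ⟨i, hi, j, hj, heq, hne⟩ := h
  rcases lt_or_gt_of_ne hne with hlt | hlt
  · exact ⟨i, j, hlt, hj, heq⟩
  · exact ⟨j, i, hlt, hi, heq.symm⟩

theorem exists_splice_and_loop {x z : V} (W : G.Walk x z) {i j : ℕ} (hij : i ≤ j)
    (hj : j ≤ W.length) (h : W.getVert i = W.getVert j) :
    ∃ (S : G.Walk x z) (K : G.Walk (W.getVert i) (W.getVert i)),
      S.edges = W.edges.take i ++ W.edges.drop j ∧ K.length = j - i ∧
        S.length + K.length = W.length := by
  refine ⟨(W.take i).append ((W.drop j).copy h.symm rfl),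
    ((W.drop i).take (j - i)).copy rfl (by rw [drop_getVert, Nat.add_sub_cancel' hij, h]),
    by simp [edges_take, edges_drop], ?_, ?_⟩
  · simp only [length_copy, take_length, drop_length]
    omega
  · simp only [length_append, length_copy, take_length, drop_length]
    omega

theorem exists_isCycle_odd_length_le {w : V} (W : G.Walk w w) (hW : Odd W.length) :
    ∃ (v : V) (c : G.Walk v v), c.IsCycle ∧ Odd c.length ∧ c.length ≤ W.length := by
  obtain ⟨n, hn⟩ : ∃ n, W.length = n := ⟨_, rfl⟩
  induction n using Nat.strong_induction_on generalizing w with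
  | _ n ih =>
  cases W with
  | nil => simp at hW
  | cons h p =>
    by_cases hp : p.IsPath
    · refine ⟨w, cons h p, isCycle_iff_isPath_tail_and_le_length.mpr ⟨by simpa using hp, ?_⟩,
        hW, le_rfl⟩
      have hp0 : p.length ≠ 0 := by
        cases p with
        | nil => exact absurd h G.irrefl
        | cons => simp
      rw [length_cons]
      rw [length_cons, Nat.odd_iff] at hW
      omega
    · obtain ⟨i, j, hij, hj, heq⟩ := exists_getVert_eq_of_not_isPath hp
      obtain ⟨S, K, -, hK, hSK⟩ := p.exists_splice_and_loop hij.le hj heq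
      rw [length_cons, Nat.odd_iff] at hW
      rw [length_cons] at hn ⊢
      rcases Nat.even_or_odd K.length with hKe | hKo
      · rw [Nat.even_iff] at hKe
        obtain ⟨v, c, hc, hco, hcl⟩ := ih (S.length + 1) (by omega) (cons h S)
          (by rw [length_cons, Nat.odd_iff]; omega) (length_cons _ _)
        exact ⟨v, c, hc, hco, by rw [length_cons] at hcl; omega⟩
      · obtain ⟨v, c, hc, hco, hcl⟩ := ih K.length (by omega) K hKo rfl
        exact ⟨v, c, hc, hco, by omega⟩

theorem _root_.List.Alternates.exists_not_mem_edges {C : Set (Sym2 V)} {x z : V} {R : G.Walk x z}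
    (h : R.edges.Alternates C 0) {t : ℕ} (ht₀ : 0 < t) (ht : t < R.length) :
    ∃ e ∈ R.edges, e ∉ C ∧ R.getVert t ∈ e := by
  obtain ⟨j, hj, hjt⟩ : ∃ j, Odd j ∧ (j = t ∨ j + 1 = t) := by
    rcases Nat.even_or_odd t with hte | hto
    · exact ⟨t - 1, by rw [Nat.odd_iff]; rw [Nat.even_iff] at hte; omega, Or.inr (by omega)⟩
    · exact ⟨t, hto, Or.inl rfl⟩
  have hjR : j < R.edges.length := by rw [Walk.length_edges]; omega
  refine ⟨R.edges[j], List.getElem_mem hjR, ?_, ?_⟩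
  · rw [h j hjR, zero_add, Nat.not_even_iff_odd]
    exact hj
  · rw [Walk.getElem_edges]
    rcases hjt with rfl | rfl <;> simp

end SimpleGraph.Walk

theorem div_le_ceil_half_div_add_ceil_half_div (κ : ℕ) :
    (κ : ℚ) / (κ + 1) ≤ (⌈(κ : ℚ) / 2⌉ : ℚ) / (κ + 1) + (⌈(κ : ℚ) / 2⌉ : ℚ) / (κ + 1) := by
  rw [← add_div]
  gcongr
  linarith [Int.le_ceil ((κ : ℚ) / 2)]

theorem div_le_div_add_one_sub_div {κ a b : ℕ} (hb : b ≤ a + 1) :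
    (κ : ℚ) / (κ + 1) ≤ (a : ℚ) / (2 * (κ + 1)) + (1 - ((b : ℚ) + 1) / (2 * (κ + 1))) := by
  have hba : (b : ℚ) ≤ a + 1 := by exact_mod_cast hb
  have hgap : (a : ℚ) / (2 * (κ + 1)) + (1 - ((b : ℚ) + 1) / (2 * (κ + 1))) - κ / (κ + 1)
      = (a + 1 - b) / (2 * (κ + 1)) := by
    field_simp
    ring
  have : (0 : ℚ) ≤ (a + 1 - b) / (2 * (κ + 1)) := div_nonneg (by linarith) (by positivity)
  linarith

theorem div_le_div_add_ceil_half_div {κ a : ℕ} (ha : Even a) (hκ : a + 1 = κ) :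
    (κ : ℚ) / (κ + 1) ≤ (a : ℚ) / (2 * (κ + 1)) + (⌈(κ : ℚ) / 2⌉ : ℚ) / (κ + 1) := by
  obtain ⟨m, rfl⟩ := ha
  subst hκ
  have hceil : ⌈((m + m + 1 : ℕ) : ℚ) / 2⌉ = m + 1 := by
    rw [Int.ceil_eq_iff]
    push_cast
    constructor <;> linarith
  rw [hceil]
  apply le_of_eq
  push_cast
  field_simp
  ring

section

variable {V : Type*} {G : SimpleGraph V} {C : Set (Sym2 V)}

def IsMinimumEdgeCover (G : SimpleGraph V) (C : Set (Sym2 V)) : Prop :=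
  IsEdgeCover G C ∧ ∀ C' : Set (Sym2 V), IsEdgeCover G C' → C.ncard ≤ C'.ncard

theorem IsTight.eq_of_mem {u : V} (hu : IsTight C u) {e₁ e₂ : Sym2 V} (he₁ : e₁ ∈ C)
    (hue₁ : u ∈ e₁) (he₂ : e₂ ∈ C) (hue₂ : u ∈ e₂) : e₁ = e₂ := by
  obtain ⟨e, he⟩ := Set.ncard_eq_one.mp hu
  have h₁ : e₁ ∈ {e ∈ C | u ∈ e} := ⟨he₁, hue₁⟩
  have h₂ : e₂ ∈ {e ∈ C | u ∈ e} := ⟨he₂, hue₂⟩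
  rw [he] at h₁ h₂
  exact h₁.trans h₂.symm

theorem IsEdgeCover.exists_mem_not_mem_edges [Finite V] (hC : IsEdgeCover G C) {x z : V}
    (hx : IsLoose C x) {R : G.Walk x z} (hR : R.IsPath) : ∃ e ∈ C, x ∈ e ∧ e ∉ R.edges := by
  have hcard : 1 < {e ∈ C | x ∈ e}.ncard := by
    obtain ⟨e, he, hxe⟩ := hC.2 x
    have : 0 < {e ∈ C | x ∈ e}.ncard := (Set.ncard_pos (Set.toFinite _)).2 ⟨e, he, hxe⟩
    exact lt_of_le_of_ne this (Ne.symm hx)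
  obtain ⟨g, ⟨hgC, hxg⟩, hg⟩ := Set.exists_ne_of_one_lt_ncard hcard s(x, R.snd)
  refine ⟨g, hgC, hxg, fun hgR => hg ?_⟩
  obtain ⟨w, rfl⟩ := Sym2.mem_iff_exists.mp hxg
  rw [hR.eq_snd_of_mem_edges hgR]

theorem IsEdgeCover.union_sdiff_edges [Finite V] (hC : IsEdgeCover G C) {x z : V}
    {R : G.Walk x z} (hR : R.IsPath) (halt : R.edges.Alternates C 0) (hx : IsLoose C x)
    (hz : IsLoose C z) :
    IsEdgeCover G ((C \ {e | e ∈ R.edges}) ∪ ({e | e ∈ R.edges} \ C)) := by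
  refine ⟨?_, fun w => ?_⟩
  · rintro e (⟨he, -⟩ | ⟨he, -⟩)
    exacts [hC.1 he, R.edges_subset_edgeSet he]
  by_cases hw : w ∈ R.support
  · obtain ⟨t, rfl, ht⟩ := Walk.mem_support_iff_exists_getVert.mp hw
    rcases Nat.eq_zero_or_pos t with rfl | ht₀
    · obtain ⟨e, he, hxe, heR⟩ := hC.exists_mem_not_mem_edges hx hR
      exact ⟨e, Or.inl ⟨he, heR⟩, by simpa using hxe⟩
    rcases ht.eq_or_lt with rfl | htL
    · obtain ⟨e, he, hze, heR⟩ := hC.exists_mem_not_mem_edges hz hR.reverse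
      exact ⟨e, Or.inl ⟨he, by simpa using heR⟩, by simpa using hze⟩
    · obtain ⟨e, heR, heC, hwe⟩ := halt.exists_not_mem_edges ht₀ htL
      exact ⟨e, Or.inr ⟨heR, heC⟩, hwe⟩
  · obtain ⟨e, he, hwe⟩ := hC.2 w
    refine ⟨e, Or.inl ⟨he, fun heR => hw ?_⟩, hwe⟩
    obtain ⟨w', rfl⟩ := Sym2.mem_iff_exists.mp hwe
    exact R.fst_mem_support_of_mem_edges heR

theorem ncard_union_sdiff_edges_add_one [Finite V] {x z : V} {R : G.Walk x z} (hR : R.IsPath)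
    (halt : R.edges.Alternates C 0) (hodd : Odd R.length) :
    ((C \ {e | e ∈ R.edges}) ∪ ({e | e ∈ R.edges} \ C)).ncard + 1 = C.ncard := by
  classical
  have hnodup := hR.isTrail.edges_nodup
  have hin : (C ∩ {e | e ∈ R.edges}).ncard = R.edges.countP (· ∈ C) := by
    rw [← hnodup.ncard_setOf_mem_and]
    congr 1
    ext
    simp [and_comm]
  have hout : ({e | e ∈ R.edges} \ C).ncard = R.edges.countP (· ∉ C) :=
    hnodup.ncard_setOf_mem_and _
  have hlen := R.edges.length_eq_countP_add_countP (· ∈ C)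
  have hcount := halt.countP_mem
  rw [Set.ncard_union_eq disjoint_sdiff_sdiff, hout,
    ← Set.ncard_inter_add_ncard_sdiff_eq_ncard C {e | e ∈ R.edges}, hin]
  simp only [Walk.length_edges, decide_eq_true_eq] at hlen hcount ⊢
  rw [Nat.odd_iff] at hodd
  omega

theorem IsMinimumEdgeCover.exists_isCycle_of_alternates [Finite V] (hC : IsMinimumEdgeCover G C)
    {x z : V} (W : G.Walk x z) (halt : W.edges.Alternates C 0) (hodd : Odd W.length)
    (hx : IsLoose C x) (hz : IsLoose C z) :
    ∃ (w : V) (c : G.Walk w w), c.IsCycle ∧ Odd c.length ∧ c.length ≤ W.length := by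
  obtain ⟨n, hn⟩ : ∃ n, W.length = n := ⟨_, rfl⟩
  induction n using Nat.strong_induction_on generalizing x z with
  | _ n ih =>
  by_cases hW : W.IsPath
  · have hcover := hC.1.union_sdiff_edges hW halt hx hz
    have hcard := ncard_union_sdiff_edges_add_one hW halt hodd
    have := hC.2 _ hcover
    omega
  obtain ⟨i, j, hij, hj, heq⟩ := Walk.exists_getVert_eq_of_not_isPath hW
  obtain ⟨S, K, hS, hK, hSK⟩ := W.exists_splice_and_loop hij.le hj heq
  -- an even closed subwalk can be cut out without breaking the alternation
  rcases Nat.even_or_odd K.length with hKe | hKo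
  · rw [Nat.even_iff] at hKe
    have hSalt : S.edges.Alternates C 0 := hS ▸ halt.take_append_drop hij.le
      (by rwa [Walk.length_edges]) (by omega)
    obtain ⟨w, c, hc, hco, hcl⟩ := ih S.length (by omega) S hSalt
      (by rw [Nat.odd_iff] at hodd ⊢; omega) hx hz rfl
    exact ⟨w, c, hc, hco, by omega⟩
  · obtain ⟨w, c, hc, hco, hcl⟩ := K.exists_isCycle_odd_length_le hKo
    exact ⟨w, c, hc, hco, by omega⟩

theorem isInterchanging_iff {u v : V} (p : G.Walk u v) :
    IsInterchanging G C p ↔ p.IsPath ∧ IsLoose C u ∧ p.edges.Alternates C 0 := by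
  rw [IsInterchanging, List.alternates_zero_iff]

theorem intDist_le_length {u v : V} {p : G.Walk u v} (hp : IsInterchanging G C p) :
    intDist G C v ≤ p.length :=
  iInf_le_of_le u (iInf_le_of_le p (iInf_le _ hp))

theorem exists_isInterchanging_length_eq {v : V} (h : intDist G C v ≠ ⊤) :
    ∃ (u : V) (p : G.Walk u v), IsInterchanging G C p ∧ (p.length : ℕ∞) = intDist G C v := by
  rw [intDist] at h ⊢
  simp only [iInf_subtype', iInf_sigma'] at h ⊢
  have : Nonempty ((u : V) × {p : G.Walk u v // IsInterchanging G C p}) := by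
    by_contra hempty
    rw [not_nonempty_iff] at hempty
    exact h (iInf_of_empty _)
  obtain ⟨⟨u, p, hp⟩, hmin⟩ := ENat.exists_eq_iInf
    (fun q : (u : V) × {p : G.Walk u v // IsInterchanging G C p} => (q.2.1.length : ℕ∞))
  exact ⟨u, p, hp, hmin⟩

theorem intDist_eq_zero_of_isLoose {v : V} (hv : IsLoose C v) : intDist G C v = 0 :=
  nonpos_iff_eq_zero.mp <| intDist_le_length (p := (Walk.nil : G.Walk v v))
    ((isInterchanging_iff _).2 ⟨.nil, hv, List.alternates_nil⟩)

theorem IsInterchanging.takeUntil [DecidableEq V] {u v w : V} {p : G.Walk u v}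
    (hp : IsInterchanging G C p) (hw : w ∈ p.support) :
    IsInterchanging G C (p.takeUntil w hw) := by
  rw [isInterchanging_iff] at hp ⊢
  have halt := hp.2.2
  rw [← p.take_spec hw, Walk.edges_append, List.alternates_append] at halt
  exact ⟨hp.1.takeUntil hw, hp.2.1, halt.1⟩

theorem IsInterchanging.concat {u v w : V} {p : G.Walk u v} (hp : IsInterchanging G C p)
    (heven : Even p.length) (h : G.Adj v w) (hvw : s(v, w) ∈ C) (hw : w ∉ p.support) :
    IsInterchanging G C (p.concat h) := by
  rw [isInterchanging_iff] at hp ⊢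
  refine ⟨hp.1.concat hw h, hp.2.1, ?_⟩
  rw [Walk.edges_concat, List.concat_eq_append, List.alternates_append, Walk.length_edges]
  exact ⟨hp.2.2, List.alternates_cons.2 ⟨iff_of_true hvw (by rwa [zero_add]), List.alternates_nil⟩⟩

theorem intDist_le_add_one_of_even {u v : V} {a : ℕ} (hu : intDist G C u = a) (ha : Even a)
    (h : G.Adj u v) (huv : s(u, v) ∈ C) : intDist G C v ≤ a + 1 := by
  classical
  obtain ⟨x, p, hp, hpa⟩ := exists_isInterchanging_length_eq (hu ▸ ENat.natCast_ne_top a)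
  rw [hu, Nat.cast_inj] at hpa
  subst hpa
  by_cases hv : v ∈ p.support
  · calc intDist G C v ≤ (p.takeUntil v hv).length := intDist_le_length (hp.takeUntil hv)
      _ ≤ p.length := by exact_mod_cast p.length_takeUntil_le_length hv
      _ ≤ p.length + 1 := le_self_add
  · simpa using intDist_le_length (hp.concat ha h huv hv)

theorem intDist_lt_of_odd {u v : V} {a : ℕ} (hu : intDist G C u = a) (ha : Odd a)
    (huv : s(u, v) ∈ C) : intDist G C v < a := by
  obtain ⟨x, p, hp, hpa⟩ := exists_isInterchanging_length_eq (hu ▸ ENat.natCast_ne_top a)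
  have htight : IsTight C u := by
    by_contra hloose
    rw [intDist_eq_zero_of_isLoose hloose, ← Nat.cast_zero, Nat.cast_inj] at hu
    exact Nat.not_odd_zero (hu ▸ ha)
  rw [hu, Nat.cast_inj] at hpa
  subst hpa
  have hnil : ¬ p.Nil := by
    rw [← Walk.length_eq_zero_iff]
    exact ha.pos.ne'
  have hadj := p.adj_penultimate hnil
  rw [← p.concat_dropLast hadj, isInterchanging_iff, Walk.concat_isPath_iff, Walk.edges_concat,
    List.concat_eq_append, List.alternates_append, Walk.length_edges, Walk.length_dropLast,
    List.alternates_cons] at hp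
  obtain ⟨⟨hpath, -⟩, hx, halt, hlast, -⟩ := hp
  have hlast_mem : s(p.penultimate, u) ∈ C := by
    rw [hlast, zero_add, Nat.even_sub ha.pos]
    simpa using ha
  have hpen : p.penultimate = v := by
    rcases Sym2.eq_iff.mp (htight.eq_of_mem hlast_mem (Sym2.mem_mk_right _ _) huv
      (Sym2.mem_mk_left _ _)) with ⟨h₁, -⟩ | ⟨h₁, -⟩
    · exact absurd h₁ hadj.ne
    · exact h₁
  calc intDist G C v = intDist G C p.penultimate := by rw [hpen]
    _ ≤ p.dropLast.length := intDist_le_length ((isInterchanging_iff _).2 ⟨hpath, hx, halt⟩)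
    _ < p.length := by
      rw [Walk.length_dropLast]
      exact_mod_cast Nat.sub_lt ha.pos one_pos

theorem IsMinimumEdgeCover.exists_isCycle_of_even_intDist [Finite V] (hC : IsMinimumEdgeCover G C)
    {u v : V} {a b : ℕ} (hu : intDist G C u = a) (hv : intDist G C v = b) (ha : Even a)
    (hb : Even b) (huv : s(u, v) ∈ C) :
    ∃ (w : V) (c : G.Walk w w), c.IsCycle ∧ Odd c.length ∧ c.length ≤ a + b + 1 := by
  obtain ⟨x, p, hp, hpa⟩ := exists_isInterchanging_length_eq (hu ▸ ENat.natCast_ne_top a)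
  obtain ⟨y, q, hq, hqb⟩ := exists_isInterchanging_length_eq (hv ▸ ENat.natCast_ne_top b)
  rw [hu, Nat.cast_inj] at hpa
  rw [hv, Nat.cast_inj] at hqb
  subst hpa hqb
  rw [isInterchanging_iff] at hp hq
  have hadj : G.Adj v u := (hC.1.1 huv).symm
  have hqe : (q.concat hadj).edges.Alternates C 0 := by
    rw [Walk.edges_concat, List.concat_eq_append, List.alternates_append, Walk.length_edges]
    refine ⟨hq.2.2, List.alternates_cons.2 ⟨iff_of_true (Sym2.eq_swap ▸ huv) (by simpa using hb),
      List.alternates_nil⟩⟩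
  have halt : (p.append (q.concat hadj).reverse).edges.Alternates C 0 := by
    rw [Walk.edges_append, List.alternates_append, Walk.length_edges, Walk.edges_reverse]
    refine ⟨hp.2.2, hqe.reverse.of_mod_two_eq ?_⟩
    rw [Walk.length_edges, Walk.length_concat]
    rw [Nat.even_iff] at ha hb
    omega
  have hodd : Odd (p.append (q.concat hadj).reverse).length := by
    rw [Walk.length_append, Walk.length_reverse, Walk.length_concat]
    exact Even.add_odd ha (Even.add_one hb)
  simpa [add_right_comm _ 1, add_assoc] using
    hC.exists_isCycle_of_alternates _ halt hodd hp.2.1 hq.2.1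

theorem yEC_of_intDist_eq (κ : ℕ) {v : V} {n : ℕ} (h : intDist G C v = n) (hn : n < κ) :
    yEC G C κ v =
      if Even n then (n : ℚ) / (2 * (κ + 1)) else 1 - ((n : ℚ) + 1) / (2 * (κ + 1)) := by
  simp [yEC, h, hn]

theorem yEC_of_le_intDist {κ : ℕ} {v : V} (h : (κ : ℕ∞) ≤ intDist G C v) :
    yEC G C κ v = (⌈(κ : ℚ) / 2⌉ : ℚ) / (κ + 1) := by
  rw [yEC, if_neg (not_lt.2 h)]

theorem le_yEC_add_yEC_of_intDist_le [Finite V] {κ : ℕ}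
    (hgirth : ∀ (w : V) (c : G.Walk w w), c.IsCycle → Odd c.length → 2 * κ + 1 ≤ c.length)
    (hC : IsMinimumEdgeCover G C) {u v : V} (huv : s(u, v) ∈ C)
    (hle : intDist G C u ≤ intDist G C v) :
    (κ : ℚ) / (κ + 1) ≤ yEC G C κ u + yEC G C κ v := by
  rcases le_or_gt (κ : ℕ∞) (intDist G C u) with hu | hu
  · rw [yEC_of_le_intDist hu, yEC_of_le_intDist (hu.trans hle)]
    exact div_le_ceil_half_div_add_ceil_half_div κ
  obtain ⟨a, ha⟩ := ENat.ne_top_iff_exists.mp (hu.trans (ENat.natCast_lt_top κ)).ne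
  rw [← ha, Nat.cast_lt] at hu
  rcases Nat.even_or_odd a with hae | hao
  swap
  · exact absurd (intDist_lt_of_odd ha.symm hao huv) (not_lt.2 (ha ▸ hle))
  have hva := intDist_le_add_one_of_even ha.symm hae (G.mem_edgeSet.mp (hC.1.1 huv)) huv
  rw [yEC_of_intDist_eq κ ha.symm hu, if_pos hae]
  rcases le_or_gt (κ : ℕ∞) (intDist G C v) with hv | hv
  · rw [yEC_of_le_intDist hv]
    have : κ ≤ a + 1 := by exact_mod_cast hv.trans hva
    exact div_le_div_add_ceil_half_div hae (by omega)
  obtain ⟨b, hb⟩ := ENat.ne_top_iff_exists.mp (hv.trans (ENat.natCast_lt_top κ)).ne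
  rw [← hb, Nat.cast_lt] at hv
  rw [← hb] at hva
  have hbo : Odd b := by
    by_contra hbe
    obtain ⟨w, c, hc, hco, hcl⟩ := hC.exists_isCycle_of_even_intDist ha.symm hb.symm hae
      (Nat.not_odd_iff_even.mp hbe) huv
    have := hgirth w c hc hco
    omega
  rw [yEC_of_intDist_eq κ hb.symm hv, if_neg (Nat.not_even_iff_odd.mpr hbo)]
  exact div_le_div_add_one_sub_div (by exact_mod_cast hva)

end

theorem stmt5_general (κ : ℕ) (G : SimpleGraph V)
    (hgirth : ∀ (w : V) (c : G.Walk w w), c.IsCycle → Odd c.length → 2 * κ + 1 ≤ c.length)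
    (C : Set (Sym2 V)) (hC : IsEdgeCover G C)
    (hmin : ∀ C' : Set (Sym2 V), IsEdgeCover G C' → C.ncard ≤ C'.ncard) :
    ∀ u v : V, s(u, v) ∈ C → (κ : ℚ) / (κ + 1) ≤ yEC G C κ u + yEC G C κ v := by
  intro u v huv
  have hCmin : IsMinimumEdgeCover G C := ⟨hC, hmin⟩
  rcases le_total (intDist G C u) (intDist G C v) with h | h
  · exact le_yEC_add_yEC_of_intDist_le hgirth hCmin huv h
  · rw [add_comm (yEC G C κ u)]
    exact le_yEC_add_yEC_of_intDist_le hgirth hCmin (Sym2.eq_swap ▸ huv) h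

theorem stmt5 (κ : ℕ) (hκ : 0 < κ) (G : SimpleGraph V)
    (hiso : ∀ v : V, ∃ u : V, G.Adj v u)
    (hgirth : ∀ (w : V) (c : G.Walk w w), c.IsCycle → Odd c.length → 2 * κ + 1 ≤ c.length)
    (C : Set (Sym2 V)) (hC : IsEdgeCover G C)
    (hmin : ∀ C' : Set (Sym2 V), IsEdgeCover G C' → C.ncard ≤ C'.ncard) :
    ∀ u v : V, s(u, v) ∈ C → (κ : ℚ) / (κ + 1) ≤ yEC G C κ u + yEC G C κ v :=
  stmt5_general κ G hgirth C hC hmin
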